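/- arXiv:2411.14634 — 2 statements merged into one kernel-verified Lean document; each statement's English description precedes it below -/
import Mathlib

section
/- Let $s \ge 2$ and let $\mathcal{L} = \{A_1, \ldots, A_m\}$ be an $s$-cover on $[n]$ with $|A_i| = a_i$. Then $\sum_{i=1}^m \binom{a_i}{2} \ge \frac{n^2}{2(s-1)} - \frac{n}{2}$. -/
/-!
Call a pair covered if it lies in some member of `L`. Each `A ∈ L` covers `(#A).choose 2` pairs,
and the graph of uncovered pairs has no clique of size `s`, so by Turán's theorem it has at most
`(s - 2) n² / (2 (s - 1))` edges. Since every pair is covered or uncovered,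
`∑ (#A).choose 2 ≥ n (n - 1) / 2 - (s - 2) n² / (2 (s - 1)) = n² / (2 (s - 1)) - n / 2`.
-/

open Finset SimpleGraph

theorem SimpleGraph.CliqueFree.two_mul_mul_card_edgeFinset_le {V : Type*} [Fintype V]
    {G : SimpleGraph V} [DecidableRel G.Adj] {r : ℕ} (cf : G.CliqueFree (r + 1)) :
    2 * r * #G.edgeFinset ≤ (r - 1) * Fintype.card V ^ 2 := by
  classical
  rcases r.eq_zero_or_pos with rfl | hr
  · simp
  obtain ⟨H, _, maxH⟩ := exists_isTuranMaximal (V := V) hr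
  calc 2 * r * #G.edgeFinset ≤ 2 * r * #H.edgeFinset := by grw [maxH.2 cf]
    _ = 2 * r * #(turanGraph (Fintype.card V) r).edgeFinset := by
      rw [((isTuranMaximal_iff_nonempty_iso_turanGraph hr).mp maxH).some.card_edgeFinset_eq]
    _ ≤ _ := mul_card_edgeFinset_turanGraph_le

theorem SimpleGraph.card_choose_two_le_card_edgeFinset_add_compl {V : Type*} [Fintype V]
    [DecidableEq V] (G : SimpleGraph V) [DecidableRel G.Adj] :
    (Fintype.card V).choose 2 ≤ #G.edgeFinset + #Gᶜ.edgeFinset := by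
  rw [← card_edgeFinset_top_eq_card_choose_two]
  refine (card_le_card fun e he => ?_).trans (card_union_le _ _)
  induction e using Sym2.ind with
  | h x y =>
    have hxy : x ≠ y := mem_edgeFinset.1 he
    by_cases hG : G.Adj x y
    · exact mem_union_left _ (mem_edgeFinset.2 hG)
    · exact mem_union_right _ (mem_edgeFinset.2 ((compl_adj _ _ _).2 ⟨hxy, hG⟩))

section coverGraph

variable {V : Type*}

def coverGraph (L : Finset (Finset V)) : SimpleGraph V :=
  SimpleGraph.fromRel fun x y => ∃ A ∈ L, x ∈ A ∧ y ∈ A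

theorem coverGraph_adj {L : Finset (Finset V)} {x y : V} :
    (coverGraph L).Adj x y ↔ x ≠ y ∧ ∃ A ∈ L, x ∈ A ∧ y ∈ A := by
  simp only [coverGraph, fromRel_adj, and_comm (a := y ∈ _), or_self]

theorem card_edgeFinset_coverGraph_le [Fintype V] [DecidableEq V] (L : Finset (Finset V))
    [DecidableRel (coverGraph L).Adj] :
    #(coverGraph L).edgeFinset ≤ ∑ A ∈ L, (#A).choose 2 := by
  have hsub : (coverGraph L).edgeFinset ⊆
      L.biUnion fun A => A.offDiag.image Sym2.mk.uncurry := by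
    intro e he
    induction e using Sym2.ind with
    | h x y =>
      obtain ⟨hxy, A, hA, hxA, hyA⟩ := coverGraph_adj.1 (mem_edgeFinset.1 he)
      exact mem_biUnion.2 ⟨A, hA, mem_image.2 ⟨(x, y), mem_offDiag.2 ⟨hxA, hyA, hxy⟩, rfl⟩⟩
  calc #(coverGraph L).edgeFinset ≤ _ := card_le_card hsub
    _ ≤ _ := card_biUnion_le
    _ = _ := by simp_rw [Sym2.card_image_offDiag]

theorem cliqueFree_compl_coverGraph {L : Finset (Finset V)} {s : ℕ}
    (hcov : ∀ S : Finset V, S.card = s → ∃ x ∈ S, ∃ y ∈ S, x ≠ y ∧ ∃ A ∈ L, x ∈ A ∧ y ∈ A) :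
    (coverGraph L)ᶜ.CliqueFree s := by
  intro S hS
  obtain ⟨x, hx, y, hy, hxy, hA⟩ := hcov S hS.card_eq
  exact ((compl_adj _ _ _).1 (hS.isClique hx hy hxy)).2 (coverGraph_adj.2 ⟨hxy, hA⟩)

end coverGraph

theorem sum_choose_two_lower_bound_general (s n : ℕ) (hs : 2 ≤ s)
    (L : Finset (Finset (Fin n)))
    (hcov : ∀ S : Finset (Fin n), S.card = s →
      ∃ x ∈ S, ∃ y ∈ S, x ≠ y ∧ ∃ A ∈ L, x ∈ A ∧ y ∈ A) :
    (∑ A ∈ L, (A.card.choose 2 : ℝ)) ≥ (n : ℝ)^2 / (2 * (s - 1)) - n / 2 := by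
  classical
  obtain ⟨r, rfl⟩ : ∃ r, s = r + 1 := ⟨s - 1, by omega⟩
  set E := #(coverGraph L)ᶜ.edgeFinset
  have hturan : 2 * r * E ≤ (r - 1) * n ^ 2 := by
    simpa using (cliqueFree_compl_coverGraph hcov).two_mul_mul_card_edgeFinset_le
  have hpairs : n.choose 2 ≤ E + ∑ A ∈ L, (#A).choose 2 := by
    simpa [add_comm] using ((coverGraph L).card_choose_two_le_card_edgeFinset_add_compl.trans
      (Nat.add_le_add_right (card_edgeFinset_coverGraph_le L) _))
  have hr : (0 : ℝ) < r := by exact_mod_cast (by omega : 0 < r)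
  have hE : (E : ℝ) ≤ (r - 1) * n ^ 2 / (2 * r) := by
    have hturanR := (Nat.cast_le (α := ℝ)).2 hturan
    push_cast [Nat.cast_sub (by omega : 1 ≤ r)] at hturanR
    rw [le_div_iff₀ (by positivity)]
    linarith
  have hpairsR : (n : ℝ) * (n - 1) / 2 ≤ E + ∑ A ∈ L, (A.card.choose 2 : ℝ) := by
    simpa [Nat.cast_choose_two] using (Nat.cast_le (α := ℝ)).2 hpairs
  calc (n : ℝ) ^ 2 / (2 * ((r + 1 : ℕ) - 1)) - n / 2
      = n * (n - 1) / 2 - (r - 1) * n ^ 2 / (2 * r) := by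
        push_cast
        field_simp [hr.ne']
        ring
    _ ≤ ∑ A ∈ L, (A.card.choose 2 : ℝ) := by linarith

theorem sum_choose_two_lower_bound (s n : ℕ) (hs : 2 ≤ s)
    (L : Finset (Finset (Fin n)))
    (hlin : ∀ A ∈ L, ∀ B ∈ L, A ≠ B → (A ∩ B).card ≤ 1)
    (hcov : ∀ S : Finset (Fin n), S.card = s →
      ∃ x ∈ S, ∃ y ∈ S, x ≠ y ∧ ∃ A ∈ L, x ∈ A ∧ y ∈ A) :
    (∑ A ∈ L, (A.card.choose 2 : ℝ)) ≥ (n : ℝ)^2 / (2 * (s - 1)) - n / 2 :=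
  sum_choose_two_lower_bound_general s n hs L hcov
end

section
/- Let $s \ge 2$ and let $\mathcal{L}$ be a family of subsets of $[n]$ with pairwise intersections of size at most 1. Suppose $A_1 \in \mathcal{L}$ with $|A_1| = a_1$, every point of $A_1$ has degree at least $d$ in $\mathcal{L}$, and write $n - 1 + (s-1)(s-2) = (s-1)a_1 q + r$ with $0 \le r < (s-1)a_1$. If $d \ge q + 2$ and $a_1 > r/(s-1)$, then $|\mathcal{L}| \ge a_1(q+1) + 1 > \frac{n-1}{s-1} + s - 1$. -/
theorem degree_bound_case (s n a1 d q r : ℕ) (hs : 2 ≤ s) (hn : 1 ≤ n)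
    (L : Finset (Finset (Fin n)))
    (hlin : ∀ A ∈ L, ∀ B ∈ L, A ≠ B → (A ∩ B).card ≤ 1)
    (A1 : Finset (Fin n)) (hA1 : A1 ∈ L) (ha1 : A1.card = a1)
    (hdeg : ∀ x ∈ A1, d ≤ (L.filter (fun B => x ∈ B)).card)
    (hqr : n - 1 + (s - 1) * (s - 2) = (s - 1) * a1 * q + r)
    (hr : r < (s - 1) * a1)
    (hd : q + 2 ≤ d)
    (har : (a1 : ℝ) > (r : ℝ) / ((s : ℝ) - 1)) :
    a1 * (q + 1) + 1 ≤ L.card ∧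
    ((a1 : ℝ) * ((q : ℝ) + 1) + 1 > ((n : ℝ) - 1) / ((s : ℝ) - 1) + (s : ℝ) - 1) := by
  constructor
  · have hdisj : ∀ x ∈ A1, ∀ y ∈ A1, x ≠ y →
        Disjoint ((L.filter (fun B => x ∈ B)).erase A1) ((L.filter (fun B => y ∈ B)).erase A1) := by
      intro x hx y hy hxy
      rw [Finset.disjoint_left]
      intro B hBx hBy
      have hB1 := Finset.mem_erase.mp hBx
      have hB2 := Finset.mem_erase.mp hBy
      have hBL := (Finset.mem_filter.mp hB1.2).1
      have hxB := (Finset.mem_filter.mp hB1.2).2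
      have hyB := (Finset.mem_filter.mp hB2.2).2
      have hcard := hlin A1 hA1 B hBL (Ne.symm hB1.1)
      have hsub : ({x, y} : Finset (Fin n)) ⊆ A1 ∩ B := by
        intro z hz
        simp only [Finset.mem_insert, Finset.mem_singleton] at hz
        rcases hz with rfl | rfl <;> simp [Finset.mem_inter, hx, hy, hxB, hyB]
      have h2 : ({x, y} : Finset (Fin n)).card = 2 := Finset.card_pair hxy
      have := Finset.card_le_card hsub
      omega
    set S := A1.biUnion (fun x => (L.filter (fun B => x ∈ B)).erase A1) with hS
    have hcardS : S.card = ∑ x ∈ A1, ((L.filter (fun B => x ∈ B)).erase A1).card :=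
      Finset.card_biUnion hdisj
    have hSsub : S ⊆ L.erase A1 := by
      intro B hB
      simp only [hS, Finset.mem_biUnion] at hB
      obtain ⟨x, _, hBx⟩ := hB
      have hB1 := Finset.mem_erase.mp hBx
      exact Finset.mem_erase.mpr ⟨hB1.1, (Finset.mem_filter.mp hB1.2).1⟩
    have hbound : ∀ x ∈ A1, q + 1 ≤ ((L.filter (fun B => x ∈ B)).erase A1).card := by
      intro x hx
      have h := hdeg x hx
      have hmem : A1 ∈ L.filter (fun B => x ∈ B) := Finset.mem_filter.mpr ⟨hA1, hx⟩
      rw [Finset.card_erase_of_mem hmem]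
      omega
    have hsum : a1 * (q + 1) ≤ S.card := by
      rw [hcardS, ← ha1]
      calc A1.card * (q + 1) = ∑ _x ∈ A1, (q + 1) := by
            rw [Finset.sum_const, smul_eq_mul]
        _ ≤ _ := Finset.sum_le_sum hbound
    have hle : S.card ≤ (L.erase A1).card := Finset.card_le_card hSsub
    have hLpos : 1 ≤ L.card := Finset.card_pos.mpr ⟨A1, hA1⟩
    have hLer : (L.erase A1).card = L.card - 1 := Finset.card_erase_of_mem hA1
    omega
  · have h1s : (1 : ℕ) ≤ s := by omega
    have hpos : (0 : ℝ) < (s : ℝ) - 1 := by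
      have : (2 : ℝ) ≤ (s : ℝ) := by exact_mod_cast hs
      linarith
    have hcast : (n : ℝ) - 1 + ((s : ℝ) - 1) * ((s : ℝ) - 2) =
        ((s : ℝ) - 1) * a1 * q + r := by
      have := congrArg (fun m : ℕ => (m : ℝ)) hqr
      push_cast [Nat.cast_sub hn, Nat.cast_sub h1s, Nat.cast_sub hs] at this
      linarith [this]
    have key : (r : ℝ) < a1 * ((s : ℝ) - 1) := by
      rw [gt_iff_lt, div_lt_iff₀ hpos] at har
      linarith
    rw [gt_iff_lt, show ((n : ℝ) - 1) / ((s : ℝ) - 1) + s - 1 =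
        (((n : ℝ) - 1) + ((s : ℝ) - 1) * ((s : ℝ) - 1)) / ((s : ℝ) - 1) from by
          field_simp; ring, div_lt_iff₀ hpos]
    nlinarith [hcast, key]
end
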